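/- arXiv:1510.04366 — 2 statements merged into one kernel-verified Lean document; each statement's English description precedes it below -/
import Mathlib

section
/- Let C be the block matrix with block structure C = [[F, H, H, ..., H],[L, C_0, C_1, ..., C_{k-1}],[L, C_{k-1}, C_0, ..., C_{k-2}],...,[L, C_1, C_2, ..., C_0]], where F is p×p, H is p×r, L is r×p, and each C_j is r×r. Let T = I_p ⊕ S where S is the block Fourier matrix with (p,q) block ω^{(p-1)(q-1)} I_r, ω = e^{2πi/k}. Then T^{-1} C T = [[F, kH],[L, B_0]] ⊕ B_1 ⊕ ... ⊕ B_{k-1}, where B_j = Σ_{m=0}^{k-1} ω^{jm} C_m; consequently σ(C) = σ([[F,kH],[L,B_0]]) ∪ σ(B_1) ∪ ... ∪ σ(B_{k-1}) as multisets. -/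
/-!
The columns of `S ⊗ I_r`, with `S = (ω^(q q'))` the Fourier matrix, are block eigenvectors of a
block circulant: `Circ(C) (S ⊗ I) = (S ⊗ I) diag(B_t)` with `B_t = ∑ ω^(t m) C_m`, because the shift
`q ↦ s + q` multiplies the Fourier mode `ω^(q t)` by `ω^(s t)`. The border blocks are constant along
the block index, i.e. multiples of the zeroth Fourier mode, so the orthogonality of characters kills
them in every block but block `0`, where they become `k H` and `L`. After moving block `0` next to
`F`, the conjugated matrix is block diagonal, and the characteristic polynomial factors accordingly.
-/

open Matrix Polynomial Finset

open scoped Kronecker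

theorem Fin.sum_pow_val_eq_ite {K : Type*} [Field K] [DecidableEq K] {k : ℕ} {x : K}
    (hx : x ^ k = 1) : ∑ q : Fin k, x ^ (q : ℕ) = if x = 1 then (k : K) else 0 := by
  rw [Fin.sum_univ_eq_sum_range (x ^ ·)]
  split_ifs with h
  · simp [h]
  · rw [geom_sum_eq h, hx, sub_self, zero_div]

namespace Matrix

variable {α : Type*} {k : ℕ}

def fourierMatrix [Monoid α] (k : ℕ) (ω : α) : Matrix (Fin k) (Fin k) α :=
  of fun q q' => ω ^ ((q : ℕ) * q')

/-- Block rows shift to the right: the transpose of Mathlib's `circulant v i j = v (i - j)`. -/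
def blockCirculant {m n : Type*} (c : Fin k → Matrix m n α) : Matrix (Fin k × m) (Fin k × n) α :=
  of fun x y => c (y.1 - x.1) x.2 y.2

def blockDFT [Semiring α] {m n : Type*} (ω : α) (c : Fin k → Matrix m n α) (t : Fin k) :
    Matrix m n α :=
  ∑ j : Fin k, ω ^ ((t : ℕ) * j) • c j

def borderedBlockDiagonal [Zero α] {P R ι : Type*} [DecidableEq ι] (i₀ : ι) (F : Matrix P P α)
    (X : Matrix P R α) (Y : Matrix R P α) (B : ι → Matrix R R α) :
    Matrix (P ⊕ ι × R) (P ⊕ ι × R) α :=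
  fromBlocks F (of fun a x => if x.1 = i₀ then X a x.2 else 0)
    (of fun x b => if x.1 = i₀ then Y x.2 b else 0)
    ((blockDiagonal B).submatrix Prod.swap Prod.swap)

theorem isSymm_fourierMatrix [CommMonoid α] (ω : α) : (fourierMatrix k ω).IsSymm := by
  ext q q'
  simp [fourierMatrix, mul_comm]

theorem blockCirculant_mul_fourierMatrix_kronecker_one {R m : Type*} [CommRing R] [NeZero k]
    [Fintype m] [DecidableEq m] {x : R} (hx : x ^ k = 1) (c : Fin k → Matrix m m R) :
    blockCirculant c * (fourierMatrix k x ⊗ₖ (1 : Matrix m m R)) =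
      (fourierMatrix k x ⊗ₖ (1 : Matrix m m R)) *
        (blockDiagonal (blockDFT x c)).submatrix Prod.swap Prod.swap := by
  ext ⟨s, i⟩ ⟨t, j⟩
  have hshift (q : Fin k) :
      x ^ (((s + q : Fin k) : ℕ) * t) = x ^ ((s : ℕ) * t) * x ^ ((t : ℕ) * q) := by
    rw [Fin.val_add, pow_mul, ← pow_eq_pow_mod _ hx, pow_add]
    ring
  simp only [blockCirculant, fourierMatrix, mul_apply, of_apply, kroneckerMap_apply, one_apply,
    mul_ite, mul_one, mul_zero, Fintype.sum_prod_type, sum_ite_eq', mem_univ, ↓reduceIte,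
    submatrix_apply, Prod.swap_prod_mk, blockDiagonal_apply, Prod.snd_swap, blockDFT, Prod.fst_swap,
    sum_apply, smul_apply, smul_eq_mul, mul_sum, ite_mul, zero_mul, sum_ite_irrel, sum_const_zero,
    sum_ite_eq]
  rw [← Equiv.sum_comp (Equiv.addLeft s)]
  simp only [Equiv.coe_addLeft, add_sub_cancel_left, hshift]
  exact Finset.sum_congr rfl fun q _ => by ring

theorem submatrix_id_snd_mul_kronecker_one_apply [CommSemiring α] {P R ι : Type*} [Fintype R]
    [DecidableEq R] [Fintype ι] (H : Matrix P R α) (S : Matrix ι ι α) (a : P) (t : ι) (j : R) :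
    ((H.submatrix id Prod.snd : Matrix P (ι × R) α) * (S ⊗ₖ (1 : Matrix R R α))) a (t, j) =
      (∑ q, S q t) * H a j := by
  simp [mul_apply, Fintype.sum_prod_type, one_apply, Finset.mul_sum, mul_comm]

theorem kronecker_one_mul_submatrix_snd_id_apply [CommSemiring α] {P R ι : Type*} [Fintype R]
    [DecidableEq R] [Fintype ι] (S : Matrix ι ι α) (L : Matrix R P α) (s : ι) (i : R) (b : P) :
    ((S ⊗ₖ (1 : Matrix R R α)) * (L.submatrix Prod.snd id : Matrix (ι × R) P α)) (s, i) b =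
      (∑ q, S s q) * L i b := by
  simp [mul_apply, Fintype.sum_prod_type, one_apply, Finset.sum_mul]

theorem charpoly_blockDiagonal {K o m : Type*} [CommRing K] [Fintype o] [DecidableEq o]
    [Fintype m] [DecidableEq m] (M : o → Matrix m m K) :
    (blockDiagonal M).charpoly = ∏ i, (M i).charpoly := by
  have : charmatrix (blockDiagonal M) = blockDiagonal fun i => charmatrix (M i) := by
    ext ⟨a, i⟩ ⟨b, j⟩
    by_cases hij : i = j
    · subst hij
      by_cases hab : a = b <;> simp [blockDiagonal_apply, hab]
    · simp [blockDiagonal_apply, hij]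
  rw [charpoly, this, det_blockDiagonal]
  rfl

theorem charpoly_borderedBlockDiagonal {K P R ι : Type*} [CommRing K] [Fintype P] [DecidableEq P]
    [Fintype R] [DecidableEq R] [Fintype ι] [DecidableEq ι] (i₀ : ι) (F : Matrix P P K)
    (X : Matrix P R K) (Y : Matrix R P K) (B : ι → Matrix R R K) :
    (borderedBlockDiagonal i₀ F X Y B).charpoly =
      (fromBlocks F X Y (B i₀)).charpoly * ∏ i ∈ univ.erase i₀, (B i).charpoly := by
  let e : (P ⊕ R) ⊕ R × {i // i ≠ i₀} ≃ P ⊕ ι × R :=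
    (Equiv.sumAssoc _ _ _).trans <| Equiv.sumCongr (.refl P) <|
      (Equiv.sumCongr (.refl R) (Equiv.prodComm _ _)).trans <|
        optionProdEquiv.symm.trans <| Equiv.prodCongr (Equiv.optionSubtypeNe i₀) (.refl R)
  have hsplit : (borderedBlockDiagonal i₀ F X Y B).submatrix e e =
      fromBlocks (fromBlocks F X Y (B i₀)) 0 0 (blockDiagonal fun i : {i // i ≠ i₀} => B i) := by
    ext ((a | i) | ⟨i, t, ht⟩) ((b | j) | ⟨j, u, hu⟩) <;>
      simp_all [e, borderedBlockDiagonal, blockDiagonal_apply, eq_comm (a := i₀)]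
  rw [← charpoly_reindex e.symm, reindex_apply, Equiv.symm_symm, hsplit,
    charpoly_fromBlocks_zero₁₂, charpoly_blockDiagonal,
    prod_subtype (p := (· ≠ i₀)) _ (fun i => by simp)]

section PrimitiveRoot

variable {K P R : Type*} [Field K] [DecidableEq K] [Fintype P] [DecidableEq P] [Fintype R]
  [DecidableEq R] {ω : K}

theorem sum_fourierMatrix_apply (hω : IsPrimitiveRoot ω k) (t : Fin k) :
    ∑ q, fourierMatrix k ω q t = if (t : ℕ) = 0 then (k : K) else 0 := by
  have hx : (ω ^ (t : ℕ)) ^ k = 1 := by rw [pow_right_comm, hω.pow_eq_one, one_pow]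
  simp_rw [fourierMatrix, of_apply, mul_comm _ (t : ℕ), pow_mul]
  rw [Fin.sum_pow_val_eq_ite hx]
  refine if_congr ?_ rfl rfl
  rw [hω.pow_eq_one_iff_dvd]
  exact ⟨fun h => Nat.eq_zero_of_dvd_of_lt h t.isLt, fun h => h ▸ dvd_zero k⟩

theorem fourierMatrix_mul_fourierMatrix_inv (hω : IsPrimitiveRoot ω k) :
    fourierMatrix k ω * fourierMatrix k ω⁻¹ = (k : K) • (1 : Matrix (Fin k) (Fin k) K) := by
  ext s t
  have hx : (ω ^ (s : ℕ) * ω⁻¹ ^ (t : ℕ)) ^ k = 1 := by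
    rw [mul_pow, pow_right_comm, pow_right_comm ω⁻¹, hω.pow_eq_one, hω.inv.pow_eq_one, one_pow,
      one_pow, one_mul]
  have hterm (q : Fin k) : ω ^ ((s : ℕ) * q) * ω⁻¹ ^ ((q : ℕ) * t) =
      (ω ^ (s : ℕ) * ω⁻¹ ^ (t : ℕ)) ^ (q : ℕ) := by
    rw [mul_pow, ← pow_mul, ← pow_mul, mul_comm (t : ℕ)]
  have hone : ω ^ (s : ℕ) * ω⁻¹ ^ (t : ℕ) = 1 ↔ s = t := by
    rw [inv_pow, mul_inv_eq_one₀ (pow_ne_zero _ (hω.ne_zero s.pos.ne')), Fin.ext_iff]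
    exact ⟨fun h => hω.pow_inj s.isLt t.isLt h, fun h => h ▸ rfl⟩
  simp_rw [mul_apply, fourierMatrix, of_apply, hterm, Fin.sum_pow_val_eq_ite hx, smul_apply,
    one_apply, smul_eq_mul, mul_ite, mul_one, mul_zero]
  exact if_congr hone rfl rfl

variable [NeZero k]

theorem fourierMatrix_kronecker_one_mul_inv (hω : IsPrimitiveRoot ω k) :
    (fourierMatrix k ω ⊗ₖ (1 : Matrix R R K)) *
      ((k : K)⁻¹ • (fourierMatrix k ω⁻¹ ⊗ₖ (1 : Matrix R R K))) = 1 := by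
  have := hω.neZero'
  rw [Matrix.mul_smul, ← mul_kronecker_mul, fourierMatrix_mul_fourierMatrix_inv hω, smul_kronecker,
    Matrix.mul_one, one_kronecker_one, smul_smul, inv_mul_cancel₀ (NeZero.ne _), one_smul]

theorem conj_fromBlocks_blockCirculant_eq_borderedBlockDiagonal (hω : IsPrimitiveRoot ω k)
    (F : Matrix P P K) (H : Matrix P R K) (L : Matrix R P K) (c : Fin k → Matrix R R K) :
    (fromBlocks (1 : Matrix P P K) 0 0 (fourierMatrix k ω ⊗ₖ (1 : Matrix R R K)))⁻¹ *
        fromBlocks F (H.submatrix id Prod.snd) (L.submatrix Prod.snd id) (blockCirculant c) *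
        fromBlocks (1 : Matrix P P K) 0 0 (fourierMatrix k ω ⊗ₖ (1 : Matrix R R K)) =
      borderedBlockDiagonal 0 F ((k : K) • H) L (blockDFT ω c) := by
  set U := fourierMatrix k ω ⊗ₖ (1 : Matrix R R K)
  set U' := (k : K)⁻¹ • (fourierMatrix k ω⁻¹ ⊗ₖ (1 : Matrix R R K))
  have hUU' : U * U' = 1 := fourierMatrix_kronecker_one_mul_inv hω
  have hinv : (fromBlocks (1 : Matrix P P K) 0 0 U)⁻¹ = fromBlocks 1 0 0 U' :=
    inv_eq_right_inv (by simp [fromBlocks_multiply, hUU'])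
  rw [hinv]
  simp only [fromBlocks_multiply, Matrix.one_mul, Matrix.mul_one, Matrix.zero_mul, Matrix.mul_zero,
    add_zero, zero_add, borderedBlockDiagonal]
  congr 1
  · ext a ⟨t, j⟩
    rw [submatrix_id_snd_mul_kronecker_one_apply, sum_fourierMatrix_apply hω]
    simp only [Fin.val_eq_zero_iff, of_apply, smul_apply, smul_eq_mul, ite_mul, zero_mul]
  · ext ⟨s, i⟩ b
    rw [Matrix.smul_mul, smul_apply, kronecker_one_mul_submatrix_snd_id_apply,
      Fintype.sum_congr _ _ fun q => (isSymm_fourierMatrix ω⁻¹).apply q s,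
      sum_fourierMatrix_apply hω.inv]
    have := hω.neZero'
    simp only [Fin.val_eq_zero_iff, of_apply, ite_mul, zero_mul, smul_eq_mul, mul_ite, mul_zero,
      inv_mul_cancel_left₀ (NeZero.ne (k : K))]
  · rw [Matrix.mul_assoc, blockCirculant_mul_fourierMatrix_kronecker_one hω.pow_eq_one,
      ← Matrix.mul_assoc, mul_eq_one_comm.mp hUU', Matrix.one_mul]

theorem charpoly_fromBlocks_blockCirculant (hω : IsPrimitiveRoot ω k) (F : Matrix P P K)
    (H : Matrix P R K) (L : Matrix R P K) (c : Fin k → Matrix R R K) :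
    (fromBlocks F (H.submatrix id Prod.snd) (L.submatrix Prod.snd id) (blockCirculant c)).charpoly =
      (fromBlocks F ((k : K) • H) L (blockDFT ω c 0)).charpoly *
        ∏ t ∈ univ.erase 0, (blockDFT ω c t).charpoly := by
  have hunit : IsUnit (fromBlocks (1 : Matrix P P K) 0 0
      (fourierMatrix k ω ⊗ₖ (1 : Matrix R R K))).det := by
    rw [det_fromBlocks_zero₁₂, det_one, one_mul]
    exact isUnit_det_of_right_inverse (fourierMatrix_kronecker_one_mul_inv hω)
  rw [← charpoly_borderedBlockDiagonal,
    ← conj_fromBlocks_blockCirculant_eq_borderedBlockDiagonal hω, charpoly_mul_comm,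
    ← Matrix.mul_assoc, mul_nonsing_inv _ hunit, Matrix.one_mul]

end PrimitiveRoot

end Matrix

/-- Bordered block-circulant decomposition: if `C` has a `p×p` corner block `F`,
first block row repeating `H`, first block column repeating `L`, and a block
circulant lower-right part with blocks `C_0, ..., C_{k-1}`, then conjugating by
`T = I_p ⊕ S` (with `S` the block Fourier matrix) yields
`[[F, kH],[L, B₀]] ⊕ B₁ ⊕ ... ⊕ B_{k-1}`, where `B_j = ∑ m, ω^(jm) • C_m`; hence
the spectrum of `C` is the union of the spectra of these summands. -/
theorem bordered_block_circulant_decomposition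
    (p k r : ℕ) (hk : 0 < k)
    (F : Matrix (Fin p) (Fin p) ℂ) (H : Matrix (Fin p) (Fin r) ℂ)
    (L : Matrix (Fin r) (Fin p) ℂ)
    (Cblk : Fin k → Matrix (Fin r) (Fin r) ℂ)
    (C : Matrix (Fin p ⊕ Fin k × Fin r) (Fin p ⊕ Fin k × Fin r) ℂ)
    (hCF : ∀ a b, C (Sum.inl a) (Sum.inl b) = F a b)
    (hCH : ∀ a (t : Fin k) (j : Fin r), C (Sum.inl a) (Sum.inr (t, j)) = H a j)
    (hCL : ∀ (s : Fin k) (i : Fin r) b, C (Sum.inr (s, i)) (Sum.inl b) = L i b)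
    (hCC : ∀ (s t : Fin k) (i j : Fin r),
      C (Sum.inr (s, i)) (Sum.inr (t, j)) = Cblk (t - s) i j)
    (ω : ℂ) (hω : ω = Complex.exp (2 * Real.pi * Complex.I / k))
    (T : Matrix (Fin p ⊕ Fin k × Fin r) (Fin p ⊕ Fin k × Fin r) ℂ)
    (hT1 : ∀ a b, T (Sum.inl a) (Sum.inl b) = if a = b then 1 else 0)
    (hT2 : ∀ a x, T (Sum.inl a) (Sum.inr x) = 0)
    (hT3 : ∀ x b, T (Sum.inr x) (Sum.inl b) = 0)
    (hT4 : ∀ (q q' : Fin k) (i j : Fin r),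
      T (Sum.inr (q, i)) (Sum.inr (q', j)) =
        ω ^ (q.val * q'.val) * (if i = j then 1 else 0))
    (B : Fin k → Matrix (Fin r) (Fin r) ℂ)
    (hB : ∀ jj : Fin k, B jj = ∑ m : Fin k, ω ^ (jj.val * m.val) • Cblk m) :
    (∀ a b, (T⁻¹ * C * T) (Sum.inl a) (Sum.inl b) = F a b) ∧
    (∀ a (t : Fin k) (j : Fin r), (T⁻¹ * C * T) (Sum.inl a) (Sum.inr (t, j)) =
      if t = (⟨0, hk⟩ : Fin k) then (k : ℂ) * H a j else 0) ∧
    (∀ (s : Fin k) (i : Fin r) b, (T⁻¹ * C * T) (Sum.inr (s, i)) (Sum.inl b) =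
      if s = (⟨0, hk⟩ : Fin k) then L i b else 0) ∧
    (∀ (s t : Fin k) (i j : Fin r), (T⁻¹ * C * T) (Sum.inr (s, i)) (Sum.inr (t, j)) =
      if s = t then B s i j else 0) ∧
    C.charpoly.roots =
      (Matrix.fromBlocks F ((k : ℂ) • H) L (B ⟨0, hk⟩)).charpoly.roots +
        ∑ jj ∈ univ.erase (⟨0, hk⟩ : Fin k), (B jj).charpoly.roots := by
  have : NeZero k := ⟨hk.ne'⟩
  have hprim : IsPrimitiveRoot ω k := hω ▸ Complex.isPrimitiveRoot_exp k hk.ne'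
  have hC : C = fromBlocks F (H.submatrix id Prod.snd) (L.submatrix Prod.snd id)
      (blockCirculant Cblk) := by
    ext (a | ⟨s, i⟩) (b | ⟨t, j⟩) <;> simp [hCF, hCH, hCL, hCC, blockCirculant]
  have hT : T = fromBlocks 1 0 0 (fourierMatrix k ω ⊗ₖ 1) := by
    ext (a | ⟨s, i⟩) (b | ⟨t, j⟩) <;> simp [hT1, hT2, hT3, hT4, fourierMatrix, one_apply]
  obtain rfl : B = blockDFT ω Cblk := _root_.funext hB
  have hconj : T⁻¹ * C * T =
      borderedBlockDiagonal ⟨0, hk⟩ F ((k : ℂ) • H) L (blockDFT ω Cblk) := by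
    rw [hC, hT]
    exact conj_fromBlocks_blockCirculant_eq_borderedBlockDiagonal hprim F H L Cblk
  refine ⟨fun _ _ => ?_, fun _ _ _ => ?_, fun _ _ _ => ?_, fun _ _ _ _ => ?_, ?_⟩
  iterate 4 simp [hconj, borderedBlockDiagonal, blockDiagonal_apply]
  have hprod : (∏ t ∈ univ.erase (0 : Fin k), (blockDFT ω Cblk t).charpoly).Monic :=
    monic_prod_of_monic _ _ fun t _ => charpoly_monic _
  rw [hC, charpoly_fromBlocks_blockCirculant hprim,
    roots_mul ((charpoly_monic _).mul hprod).ne_zero, roots_prod _ _ hprod.ne_zero]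
  rfl
end

section
/- Let G be a graph on n vertices with a basic automorphism φ having N orbits of size 1 and all other orbits of size k > 1, and let M be a symmetric automorphism compatible matrix on G. If k is odd, M has at most N + (n−N)/k simple eigenvalues; if k is even, M has at most N + 2(n−N)/k simple eigenvalues. -/
/-!
Let `P v = v ∘ φ` be the permutation action on `ℝⁿ`; compatibility of `M` says that `M` commutes
with `P`. The eigenspace of a simple eigenvalue is a line, hence `P`-stable, so `P` acts on it by a
real scalar `c` with `c ^ k = 1`: either `c = 1`, or `c = -1` and `k` is even. Eigenvectors of
distinct eigenvalues are independent, so at most `dim ker (P - 1) ≤ N + (n - N) / k` simple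
eigenvalues have `c = 1` (a `φ`-invariant vector is determined by its values at the fixed points
and at one point of each orbit), and at most `dim ker (P + 1) ≤ (n - N) / k` have `c = -1` (an
anti-invariant vector also vanishes at the fixed points).
-/

open Finset Matrix Module LinearMap Polynomial

namespace Module.End

variable {K V : Type*} [Field K] [AddCommGroup V] [Module K V]

section FiniteDimensional

variable [FiniteDimensional K V]

theorem card_le_finrank_of_forall_exists_hasEigenvector_mem {f : End K V} {W : Submodule K V}
    {s : Finset K} (h : ∀ μ ∈ s, ∃ v ∈ W, f.HasEigenvector μ v) : #s ≤ finrank K W := by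
  choose! v hvW hv using h
  have hli : LinearIndependent K (fun μ : s ↦ (⟨v μ, hvW μ μ.2⟩ : W)) :=
    LinearIndependent.of_comp W.subtype <|
      f.eigenvectors_linearIndependent' (fun μ : s ↦ (μ : K)) Subtype.val_injective _
        fun μ ↦ hv μ μ.2
  simpa using hli.fintype_card_le_finrank

theorem card_le_finrank_add_finrank_of_forall_exists_hasEigenvector_mem {f : End K V}
    {W₁ W₂ : Submodule K V} {s : Finset K}
    (h : ∀ μ ∈ s, ∃ v, f.HasEigenvector μ v ∧ (v ∈ W₁ ∨ v ∈ W₂)) :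
    #s ≤ finrank K W₁ + finrank K W₂ := by
  classical
  rw [← card_filter_add_card_filter_not (s := s) fun μ ↦ ∃ v ∈ W₁, f.HasEigenvector μ v]
  refine add_le_add (card_le_finrank_of_forall_exists_hasEigenvector_mem (f := f) fun μ hμ ↦ ?_)
    (card_le_finrank_of_forall_exists_hasEigenvector_mem (f := f) fun μ hμ ↦ ?_)
  · exact (mem_filter.mp hμ).2
  · obtain ⟨hμs, hμ₁⟩ := mem_filter.mp hμ
    obtain ⟨v, hv, hv₁ | hv₂⟩ := h μ hμs
    · exact absurd ⟨v, hv₁, hv⟩ hμ₁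
    · exact ⟨v, hv₂, hv⟩

theorem hasEigenvalue_of_rootMultiplicity_pos {f : End K V} {μ : K}
    (hμ : 0 < f.charpoly.rootMultiplicity μ) : f.HasEigenvalue μ :=
  (f.hasEigenvalue_iff_isRoot_charpoly μ).mpr (rootMultiplicity_pos'.mp hμ).2

theorem finrank_eigenspace_eq_one_of_rootMultiplicity_eq_one {f : End K V} {μ : K}
    (hμ : f.charpoly.rootMultiplicity μ = 1) : finrank K (f.eigenspace μ) = 1 :=
  le_antisymm (hμ ▸ LinearMap.finrank_eigenspace_le f μ)
    (Submodule.one_le_finrank_iff.mpr (hasEigenvalue_of_rootMultiplicity_pos (by omega)))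

theorem exists_hasEigenvector_mem_eigenspace_of_commute {f g : End K V} (hfg : Commute f g)
    {μ : K} (hμ : f.charpoly.rootMultiplicity μ = 1) :
    ∃ v, f.HasEigenvector μ v ∧ ∃ c, v ∈ g.eigenspace c := by
  have hμ₀ : f.HasEigenvalue μ := hasEigenvalue_of_rootMultiplicity_pos (by omega)
  obtain ⟨v, hv⟩ := hμ₀.exists_hasEigenvector
  obtain ⟨c, hc⟩ := (finrank_eq_one_iff_of_nonzero' (⟨v, hv.1⟩ : f.eigenspace μ)
    (by simpa using hv.2)).mp (finrank_eigenspace_eq_one_of_rootMultiplicity_eq_one hμ)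
    ⟨g v, mapsTo_genEigenspace_of_comm hfg μ 1 hv.1⟩
  exact ⟨v, hv, c, mem_eigenspace_iff.mpr (congrArg Subtype.val hc).symm⟩

end FiniteDimensional

section LinearOrder

variable [LinearOrder K] [IsStrictOrderedRing K]

theorem HasEigenvector.eq_one_or_eq_neg_one_of_pow_eq_one {g : End K V} {k : ℕ} (hk : k ≠ 0)
    (hg : g ^ k = 1) {c : K} {v : V} (hv : g.HasEigenvector c v) : c = 1 ∨ c = -1 ∧ Even k := by
  have hck : c ^ k = 1 := by
    have := hv.pow_apply k
    rw [hg, one_apply] at this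
    exact smul_left_injective K hv.2 (by simpa using this.symm)
  simpa [hk] using pow_eq_one_iff_cases.mp hck

theorem exists_hasEigenvector_mem_eigenspace_one_or_neg_one [FiniteDimensional K V]
    {f g : End K V} (hfg : Commute f g) {k : ℕ} (hk : k ≠ 0) (hg : g ^ k = 1) {μ : K}
    (hμ : f.charpoly.rootMultiplicity μ = 1) :
    ∃ v, f.HasEigenvector μ v ∧ (v ∈ g.eigenspace 1 ∨ Even k ∧ v ∈ g.eigenspace (-1)) := by
  obtain ⟨v, hv, c, hc⟩ := exists_hasEigenvector_mem_eigenspace_of_commute hfg hμ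
  refine ⟨v, hv, ?_⟩
  rcases HasEigenvector.eq_one_or_eq_neg_one_of_pow_eq_one hk hg ⟨hc, hv.2⟩ with rfl | ⟨rfl, hk⟩
  exacts [.inl hc, .inr ⟨hk, hc⟩]

end LinearOrder

end Module.End

theorem Matrix.commute_toLin'_funLeft {R α : Type*} [CommSemiring R] [Fintype α] [DecidableEq α]
    {M : Matrix α α R} {σ : Equiv.Perm α} (hM : ∀ i j, M (σ i) (σ j) = M i j) :
    Commute (toLin' M) (funLeft R R σ) := by
  have hMσ : M.submatrix σ σ = M := Matrix.ext hM
  refine LinearMap.ext fun v ↦ ?_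
  have := submatrix_mulVec_equiv M (v ∘ σ) σ σ
  simpa [hMσ, Function.comp_def, funLeft] using this

theorem LinearMap.funLeft_pow {R M α : Type*} [Semiring R] [AddCommMonoid M] [Module R M]
    (φ : α → α) (k : ℕ) : funLeft R M φ ^ k = funLeft R M φ^[k] := by
  induction k with
  | zero => rfl
  | succ k ih => rw [pow_succ, ih, Function.iterate_succ', funLeft_comp]; rfl

section OrbitDecomposition

variable {K α : Type*} [Field K] {φ : α → α}

theorem LinearMap.apply_iterate_of_mem_eigenspace_funLeft {c : K} {v : α → K}
    (hv : v ∈ End.eigenspace (funLeft K K φ) c) (a : ℕ) (x : α) : v (φ^[a] x) = c ^ a * v x := by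
  have hφ : ∀ y, v (φ y) = c * v y := fun y ↦ congrFun (End.mem_eigenspace_iff.mp hv) y
  induction a with
  | zero => simp
  | succ a ih => rw [Function.iterate_succ_apply', hφ, ih, pow_succ]; ring

variable {N k r : ℕ} {τf : Fin N → α} {τ : Fin r → α}

def orbitParametrization (φ : α → α) (τf : Fin N → α) (τ : Fin r → α) :
    Fin N ⊕ Fin k × Fin r → α :=
  Sum.elim τf fun q ↦ φ^[q.1] (τ q.2)

theorem iterate_eq_id_of_surjective_orbitParametrization (hτf : ∀ a, φ (τf a) = τf a)
    (hper : ∀ i, φ^[k] (τ i) = τ i)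
    (hcover : (orbitParametrization (k := k) φ τf τ).Surjective) :
    φ^[k] = id := by
  funext x
  obtain ⟨a | ⟨j, i⟩, rfl⟩ := hcover x
  · exact Function.iterate_fixed (hτf a) k
  · simp only [orbitParametrization, Sum.elim_inr, id_eq]
    rw [← Function.iterate_add_apply, add_comm, Function.iterate_add_apply, hper]

theorem LinearMap.finrank_eigenspace_funLeft_one_le
    (hcover : (orbitParametrization (k := k) φ τf τ).Surjective) :
    finrank K (End.eigenspace (funLeft K K φ) 1) ≤ N + r := by
  let restrict := funLeft K K (Sum.elim τf τ) ∘ₗ (End.eigenspace (funLeft K K φ) 1).subtype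
  have hinj : Function.Injective restrict := by
    refine (injective_iff_map_eq_zero _).mpr fun v hv ↦ Subtype.ext <| funext fun x ↦ ?_
    obtain ⟨a | ⟨j, i⟩, rfl⟩ := hcover x
    · exact congrFun hv (.inl a)
    · have hvτ : v.1 (τ i) = 0 := congrFun hv (.inr i)
      simp [orbitParametrization, apply_iterate_of_mem_eigenspace_funLeft v.2, hvτ]
  simpa using finrank_le_finrank_of_injective hinj

theorem LinearMap.finrank_eigenspace_funLeft_neg_one_le [CharZero K] (hτf : ∀ a, φ (τf a) = τf a)
    (hcover : (orbitParametrization (k := k) φ τf τ).Surjective) :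
    finrank K (End.eigenspace (funLeft K K φ) (-1)) ≤ r := by
  let restrict := funLeft K K τ ∘ₗ (End.eigenspace (funLeft K K φ) (-1)).subtype
  have hinj : Function.Injective restrict := by
    refine (injective_iff_map_eq_zero _).mpr fun v hv ↦ Subtype.ext <| funext fun x ↦ ?_
    obtain ⟨a | ⟨j, i⟩, rfl⟩ := hcover x
    · have := apply_iterate_of_mem_eigenspace_funLeft v.2 1 (τf a)
      simpa [orbitParametrization, hτf, self_eq_neg] using this
    · have hvτ : v.1 (τ i) = 0 := congrFun hv i
      simp [orbitParametrization, apply_iterate_of_mem_eigenspace_funLeft v.2, hvτ]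
  simpa using finrank_le_finrank_of_injective hinj

end OrbitDecomposition

theorem basic_simple_eigenvalue_bound_general
    {n k N r : ℕ} (hk : 1 < k)
    (φ : Equiv.Perm (Fin n))
    (M : Matrix (Fin n) (Fin n) ℝ)
    (hM : ∀ i j, M (φ i) (φ j) = M i j)
    (τf : Fin N → Fin n) (hτf : ∀ a, φ (τf a) = τf a)
    (τ : Fin r → Fin n) (hper : ∀ i, (⇑φ)^[k] (τ i) = τ i)
    (hbij : Function.Bijective
      (Sum.elim τf (fun q : Fin k × Fin r => (⇑φ)^[q.1.val] (τ q.2)) :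
        Fin N ⊕ Fin k × Fin r → Fin n)) :
    (Odd k →
      (M.charpoly.roots.toFinset.filter
        (fun μ => M.charpoly.roots.count μ = 1)).card ≤ N + (n - N) / k) ∧
    (Even k →
      (M.charpoly.roots.toFinset.filter
        (fun μ => M.charpoly.roots.count μ = 1)).card ≤ N + 2 * ((n - N) / k)) := by
  have hn : N + k * r = n := by simpa using Fintype.card_of_bijective hbij
  have hr : (n - N) / k = r := by
    rw [show n - N = k * r by omega, Nat.mul_div_cancel_left r (by omega)]
  have hg : funLeft ℝ ℝ ⇑φ ^ k = 1 := by
    rw [funLeft_pow, iterate_eq_id_of_surjective_orbitParametrization hτf hper hbij.2]; rfl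
  have hsimple : ∀ μ ∈ M.charpoly.roots.toFinset.filter (fun μ => M.charpoly.roots.count μ = 1),
      ∃ v, End.HasEigenvector (toLin' M) μ v ∧ (v ∈ End.eigenspace (funLeft ℝ ℝ ⇑φ) 1 ∨
        Even k ∧ v ∈ End.eigenspace (funLeft ℝ ℝ ⇑φ) (-1)) := fun μ hμ ↦
    End.exists_hasEigenvector_mem_eigenspace_one_or_neg_one (commute_toLin'_funLeft hM)
      (by omega) hg (by simpa [count_roots] using (mem_filter.mp hμ).2)
  have hfix := finrank_eigenspace_funLeft_one_le (K := ℝ) hbij.2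
  have hanti := finrank_eigenspace_funLeft_neg_one_le (K := ℝ) hτf hbij.2
  rw [hr]
  refine ⟨fun hodd ↦ ?_, fun _ ↦ ?_⟩
  · refine (End.card_le_finrank_of_forall_exists_hasEigenvector_mem (f := toLin' M)
      fun μ hμ ↦ ?_).trans hfix
    obtain ⟨v, hv, hv₁ | ⟨heven, -⟩⟩ := hsimple μ hμ
    exacts [⟨v, hv₁, hv⟩, absurd heven (Nat.not_even_iff_odd.mpr hodd)]
  · calc _ ≤ _ := End.card_le_finrank_add_finrank_of_forall_exists_hasEigenvector_mem
          fun μ hμ ↦ (hsimple μ hμ).imp fun v ⟨hv, hmem⟩ ↦ ⟨hv, hmem.imp_right And.right⟩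
      _ ≤ N + r + r := add_le_add hfix hanti
      _ = N + 2 * r := by ring

/-- Bound on the number of simple eigenvalues of a real symmetric automorphism
compatible matrix on a graph with a basic automorphism `φ` having `N` fixed
vertices and `r = (n-N)/k` orbits of size `k > 1`: at most `N + (n-N)/k` simple
eigenvalues if `k` is odd, and at most `N + 2(n-N)/k` if `k` is even. -/
theorem basic_simple_eigenvalue_bound
    {n k N r : ℕ} (hk : 1 < k)
    (φ : Equiv.Perm (Fin n))
    (M : Matrix (Fin n) (Fin n) ℝ)
    (hM : ∀ i j, M (φ i) (φ j) = M i j)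
    (hsym : Mᵀ = M)
    (τf : Fin N → Fin n) (hτf : ∀ a, φ (τf a) = τf a)
    (τ : Fin r → Fin n) (hper : ∀ i, (⇑φ)^[k] (τ i) = τ i)
    (hbij : Function.Bijective
      (Sum.elim τf (fun q : Fin k × Fin r => (⇑φ)^[q.1.val] (τ q.2)) :
        Fin N ⊕ Fin k × Fin r → Fin n)) :
    (Odd k →
      (M.charpoly.roots.toFinset.filter
        (fun μ => M.charpoly.roots.count μ = 1)).card ≤ N + (n - N) / k) ∧
    (Even k →
      (M.charpoly.roots.toFinset.filter
        (fun μ => M.charpoly.roots.count μ = 1)).card ≤ N + 2 * ((n - N) / k)) :=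
  basic_simple_eigenvalue_bound_general hk φ M hM τf hτf τ hper hbij
end
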